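/- arXiv:1810.02998 — 2 statements merged into one kernel-verified Lean document; each statement's English description precedes it below -/
import Mathlib

section
/- For probability measures P and Q and any n ≥ 1, the total variation distance between the n-fold product measures satisfies ‖P^{⊗n} − Q^{⊗n}‖_TV ≤ √(2n ‖P − Q‖_TV). -/
/-!
Total variation is subadditive under products: by Fubini, changing one factor of a product
measure at a time moves the mass of a measurable set by at most the total variation distance of
that factor, because every section measure is a `[0, 1]`-valued function and, by the layer cake
formula, integrals of such functions against `P` and `Q` differ by at most `‖P - Q‖_TV`. Hence
`T := ‖P^⊗n - Q^⊗n‖_TV ≤ n ‖P - Q‖_TV`, and since also `T ≤ 1` we get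
`T² ≤ T ≤ n ‖P - Q‖_TV ≤ 2n ‖P - Q‖_TV`.
-/

open MeasureTheory ProbabilityTheory Set

/-- Total variation distance between two measures. -/
noncomputable def tvDist {α : Type*} [MeasurableSpace α] (P Q : Measure α) : ℝ :=
  ⨆ s : {s : Set α // MeasurableSet s}, |(P s).toReal - (Q s).toReal|

section TotalVariation

variable {α : Type*} [MeasurableSpace α]

lemma tvDist_comm (P Q : Measure α) : tvDist P Q = tvDist Q P := by
  simp only [tvDist, abs_sub_comm]

lemma bddAbove_range_abs_measure_sub (P Q : Measure α) [IsFiniteMeasure P] [IsFiniteMeasure Q] :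
    BddAbove (range fun s : {s : Set α // MeasurableSet s} => |(P s).toReal - (Q s).toReal|) := by
  refine ⟨P.real univ + Q.real univ, ?_⟩
  rintro _ ⟨s, rfl⟩
  change |P.real s - Q.real s| ≤ _
  have hP : P.real s ≤ P.real univ := measureReal_mono (subset_univ _)
  have hQ : Q.real s ≤ Q.real univ := measureReal_mono (subset_univ _)
  rw [abs_sub_le_iff]
  constructor <;> linarith [measureReal_nonneg (μ := P) (s := s.1),
    measureReal_nonneg (μ := Q) (s := s.1)]

lemma abs_measure_sub_le_tvDist (P Q : Measure α) [IsFiniteMeasure P] [IsFiniteMeasure Q]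
    {s : Set α} (hs : MeasurableSet s) : |(P s).toReal - (Q s).toReal| ≤ tvDist P Q :=
  le_ciSup (bddAbove_range_abs_measure_sub P Q) ⟨s, hs⟩

lemma tvDist_nonneg (P Q : Measure α) [IsFiniteMeasure P] [IsFiniteMeasure Q] :
    0 ≤ tvDist P Q :=
  (abs_nonneg _).trans (abs_measure_sub_le_tvDist P Q MeasurableSet.empty)

lemma tvDist_le_one (P Q : Measure α) [IsProbabilityMeasure P] [IsProbabilityMeasure Q] :
    tvDist P Q ≤ 1 := by
  refine ciSup_le fun s => abs_sub_le_iff.2 ⟨?_, ?_⟩ <;>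
    simp only [← measureReal_def] <;>
    linarith [measureReal_le_one (μ := P) (s := s.1), measureReal_le_one (μ := Q) (s := s.1),
      measureReal_nonneg (μ := P) (s := s.1), measureReal_nonneg (μ := Q) (s := s.1)]

lemma measure_le_add_tvDist (P Q : Measure α) [IsFiniteMeasure P] [IsFiniteMeasure Q]
    {s : Set α} (hs : MeasurableSet s) : P s ≤ Q s + ENNReal.ofReal (tvDist P Q) := by
  have h := (abs_sub_le_iff.1 (abs_measure_sub_le_tvDist P Q hs)).1
  simp only [← measureReal_def] at h
  rw [← ofReal_measureReal (μ := P), ← ofReal_measureReal (μ := Q),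
    ← ENNReal.ofReal_add measureReal_nonneg (tvDist_nonneg P Q)]
  exact ENNReal.ofReal_le_ofReal (by linarith)

lemma tvDist_le_of_forall_measure_le_add (P Q : Measure α) [IsFiniteMeasure P]
    [IsFiniteMeasure Q] {c : ℝ} (hc : 0 ≤ c)
    (hPQ : ∀ s, MeasurableSet s → P s ≤ Q s + ENNReal.ofReal c)
    (hQP : ∀ s, MeasurableSet s → Q s ≤ P s + ENNReal.ofReal c) :
    tvDist P Q ≤ c := by
  have bound : ∀ (μ ν : Measure α) [IsFiniteMeasure ν] (s : Set α),
      μ s ≤ ν s + ENNReal.ofReal c → (μ s).toReal ≤ (ν s).toReal + c := fun μ ν _ s h => by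
    simpa [ENNReal.toReal_add, measure_ne_top, hc] using
      ENNReal.toReal_mono (by finiteness) h
  refine ciSup_le fun ⟨s, hs⟩ => abs_sub_le_iff.2 ⟨?_, ?_⟩
  · linarith [bound P Q s (hPQ s hs)]
  · linarith [bound Q P s (hQP s hs)]

lemma tvDist_map_le {β : Type*} [MeasurableSpace β] (μ ν : Measure α) [IsFiniteMeasure μ]
    [IsFiniteMeasure ν] {f : α → β} (hf : Measurable f) :
    tvDist (μ.map f) (ν.map f) ≤ tvDist μ ν :=
  ciSup_le fun ⟨s, hs⟩ => by
    simpa only [Measure.map_apply hf hs] using abs_measure_sub_le_tvDist μ ν (hf hs)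

end TotalVariation

section LayerCake

variable {α : Type*} [MeasurableSpace α]

lemma lintegral_ofReal_eq_setLIntegral_Ioc_measure_lt (μ : Measure α) {g : α → ℝ}
    (hg : Measurable g) (hg0 : 0 ≤ g) (hg1 : ∀ x, g x ≤ 1) :
    ∫⁻ x, ENNReal.ofReal (g x) ∂μ = ∫⁻ t in Ioc 0 1, μ {x | t < g x} := by
  have high_layers : ∫⁻ t in Ioi 1, μ {x | t < g x} = 0 := by
    refine (setLIntegral_congr_fun measurableSet_Ioi fun t (ht : 1 < t) => ?_).trans
      lintegral_zero
    simp [fun x => not_lt.2 ((hg1 x).trans ht.le)]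
  rw [lintegral_eq_lintegral_meas_lt μ (.of_forall hg0) hg.aemeasurable,
    ← Ioc_union_Ioi_eq_Ioi zero_le_one, lintegral_union measurableSet_Ioi Ioc_disjoint_Ioi_same,
    high_layers, add_zero]

lemma lintegral_ofReal_le_add_tvDist (P Q : Measure α) [IsFiniteMeasure P] [IsFiniteMeasure Q]
    {g : α → ℝ} (hg : Measurable g) (hg0 : 0 ≤ g) (hg1 : ∀ x, g x ≤ 1) :
    ∫⁻ x, ENNReal.ofReal (g x) ∂P
      ≤ ∫⁻ x, ENNReal.ofReal (g x) ∂Q + ENNReal.ofReal (tvDist P Q) := by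
  simp only [lintegral_ofReal_eq_setLIntegral_Ioc_measure_lt _ hg hg0 hg1]
  calc ∫⁻ t in Ioc 0 1, P {x | t < g x}
      ≤ ∫⁻ t in Ioc 0 1, (Q {x | t < g x} + ENNReal.ofReal (tvDist P Q)) :=
        lintegral_mono fun t => measure_le_add_tvDist P Q (measurableSet_lt measurable_const hg)
    _ = (∫⁻ t in Ioc 0 1, Q {x | t < g x}) + ENNReal.ofReal (tvDist P Q) := by
        simp [lintegral_add_right _ measurable_const]

end LayerCake

section Products

variable {α β : Type*} [MeasurableSpace α] [MeasurableSpace β]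
  (μ μ' : Measure α) (ν ν' : Measure β) [IsProbabilityMeasure μ] [IsProbabilityMeasure μ']
  [IsProbabilityMeasure ν] [IsProbabilityMeasure ν']

lemma prod_apply_le_add_tvDist {s : Set (α × β)} (hs : MeasurableSet s) :
    μ.prod ν s ≤ μ'.prod ν' s + ENNReal.ofReal (tvDist μ μ' + tvDist ν ν') := by
  have section_measure (κ : Measure β) [IsProbabilityMeasure κ] (x : α) :
      ENNReal.ofReal (κ (Prod.mk x ⁻¹' s)).toReal = κ (Prod.mk x ⁻¹' s) :=
    ENNReal.ofReal_toReal (measure_ne_top _ _)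
  have change_first := lintegral_ofReal_le_add_tvDist μ μ'
    (g := fun x => (ν (Prod.mk x ⁻¹' s)).toReal)
    (measurable_measure_prodMk_left hs).ennreal_toReal (fun _ => measureReal_nonneg)
    (fun _ => measureReal_le_one)
  simp only [section_measure] at change_first
  rw [Measure.prod_apply hs, Measure.prod_apply hs,
    ENNReal.ofReal_add (tvDist_nonneg μ μ') (tvDist_nonneg ν ν')]
  calc ∫⁻ x, ν (Prod.mk x ⁻¹' s) ∂μ
      ≤ ∫⁻ x, ν (Prod.mk x ⁻¹' s) ∂μ' + ENNReal.ofReal (tvDist μ μ') := change_first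
    _ ≤ ∫⁻ x, (ν' (Prod.mk x ⁻¹' s) + ENNReal.ofReal (tvDist ν ν')) ∂μ'
          + ENNReal.ofReal (tvDist μ μ') := by
        gcongr with x
        exact measure_le_add_tvDist ν ν' (measurable_prodMk_left hs)
    _ = ∫⁻ x, ν' (Prod.mk x ⁻¹' s) ∂μ'
          + (ENNReal.ofReal (tvDist μ μ') + ENNReal.ofReal (tvDist ν ν')) := by
        rw [lintegral_add_right _ measurable_const, lintegral_const, measure_univ, mul_one]
        ring

lemma tvDist_prod_le : tvDist (μ.prod ν) (μ'.prod ν') ≤ tvDist μ μ' + tvDist ν ν' := by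
  refine tvDist_le_of_forall_measure_le_add _ _
    (add_nonneg (tvDist_nonneg μ μ') (tvDist_nonneg ν ν'))
    (fun s hs => prod_apply_le_add_tvDist μ μ' ν ν' hs) (fun s hs => ?_)
  simpa only [tvDist_comm μ', tvDist_comm ν'] using prod_apply_le_add_tvDist μ' μ ν' ν hs

end Products

lemma tvDist_pi_le_sum {n : ℕ} {α : Fin n → Type*} [∀ i, MeasurableSpace (α i)]
    (P Q : ∀ i, Measure (α i)) [∀ i, IsProbabilityMeasure (P i)]
    [∀ i, IsProbabilityMeasure (Q i)] :
    tvDist (Measure.pi P) (Measure.pi Q) ≤ ∑ i, tvDist (P i) (Q i) := by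
  induction n with
  | zero =>
    rw [Measure.pi_of_empty P, Measure.pi_of_empty Q]
    simp [tvDist]
  | succ n ih =>
    have split (R : ∀ i, Measure (α i)) [∀ i, IsProbabilityMeasure (R i)] :
        Measure.pi R = ((R 0).prod (Measure.pi fun j => R (Fin.succAbove 0 j))).map
          (MeasurableEquiv.piFinSuccAbove α 0).symm :=
      (measurePreserving_piFinSuccAbove R 0).symm.map_eq.symm
    rw [split P, split Q, Fin.sum_univ_succAbove _ 0]
    refine (tvDist_map_le _ _ (MeasurableEquiv.measurable _)).trans ?_
    refine (tvDist_prod_le _ _ _ _).trans ?_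
    gcongr
    exact ih _ _

theorem stmt2_general {α : Type*} [MeasurableSpace α] (P Q : Measure α)
    [IsProbabilityMeasure P] [IsProbabilityMeasure Q] (n : ℕ) :
    tvDist (Measure.pi (fun _ : Fin n => P)) (Measure.pi (fun _ : Fin n => Q))
      ≤ Real.sqrt (2 * n * tvDist P Q) := by
  set T := tvDist (Measure.pi (fun _ : Fin n => P)) (Measure.pi (fun _ : Fin n => Q))
  have hT_le_sum : T ≤ n * tvDist P Q := by
    simpa using tvDist_pi_le_sum (fun _ : Fin n => P) (fun _ => Q)
  have hT_nonneg : 0 ≤ T := tvDist_nonneg _ _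
  have hT_le_one : T ≤ 1 := tvDist_le_one _ _
  have hdist_nonneg : 0 ≤ (n : ℝ) * tvDist P Q := mul_nonneg n.cast_nonneg (tvDist_nonneg P Q)
  exact Real.le_sqrt_of_sq_le (by nlinarith)

theorem stmt2 {α : Type*} [MeasurableSpace α] (P Q : Measure α)
    [IsProbabilityMeasure P] [IsProbabilityMeasure Q] (n : ℕ) (hn : 1 ≤ n) :
    tvDist (Measure.pi (fun _ : Fin n => P)) (Measure.pi (fun _ : Fin n => Q))
      ≤ Real.sqrt (2 * n * tvDist P Q) :=
  stmt2_general P Q n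
end

section
/- For 0 < Σ₁ ≤ Σ₂ and any n ≥ 1, the total variation distance between N(0,Σ₁²)^{⊗n} and N(0,Σ₂²)^{⊗n} is at most 1 − (Σ₁/Σ₂)^n. -/
open MeasureTheory ProbabilityTheory
open scoped NNReal

/-!
Since `σ₁ ≤ σ₂`, the densities satisfy `(σ₁/σ₂) φ_{σ₁} ≤ φ_{σ₂}` pointwise, so
`(σ₁/σ₂) • N(0,σ₁²) ≤ N(0,σ₂²)` as measures, and taking products `c • P ≤ Q` with
`c = (σ₁/σ₂)^n`. For probability measures this domination gives `|P s - Q s| ≤ 1 - c` for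
every `s`: `P s - Q s ≤ (1 - c) P s`, and the same bound for `sᶜ` gives `Q s - P s ≤ 1 - c`.
-/

namespace MeasureTheory.Measure

variable {ι : Type*} [Fintype ι] {α : ι → Type*} [∀ i, MeasurableSpace (α i)]

theorem pi_mono {μ ν : ∀ i, Measure (α i)} (h : ∀ i, μ i ≤ ν i) :
    Measure.pi μ ≤ Measure.pi ν := by
  have hout : OuterMeasure.pi (fun i => (μ i).toOuterMeasure) ≤
      OuterMeasure.pi (fun i => (ν i).toOuterMeasure) := by
    rw [OuterMeasure.le_pi]
    intro s _
    exact (OuterMeasure.pi_pi_le _ s).trans (Finset.prod_le_prod' fun i _ => h i (s i))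
  refine le_iff.mpr fun s hs => ?_
  simp only [Measure.pi, toMeasure_apply _ _ hs]
  exact hout s

theorem pi_smul (μ : ∀ i, Measure (α i)) [∀ i, SigmaFinite (μ i)] (c : ι → ℝ≥0) :
    Measure.pi (fun i => c i • μ i) = (∏ i, c i) • Measure.pi μ := by
  refine pi_eq fun s hs => ?_
  simp only [smul_apply, pi_pi, Finset.prod_mul_distrib, ENNReal.smul_def,
    smul_eq_mul, ENNReal.ofNNReal_finsetProd]

end MeasureTheory.Measure

theorem tvDist_le_one_sub_of_smul_le {α : Type*} [MeasurableSpace α] {P Q : Measure α}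
    [IsProbabilityMeasure P] [IsProbabilityMeasure Q] {c : ℝ≥0} (h : c • P ≤ Q) :
    tvDist P Q ≤ 1 - c := by
  have hdom : ∀ s, c * P.real s ≤ Q.real s := fun s => by
    simpa [measureReal_def, ENNReal.toReal_mul] using
      ENNReal.toReal_mono (measure_ne_top Q s) (h s)
  have hc : (c : ℝ) ≤ 1 := by simpa using hdom Set.univ
  refine Real.iSup_le (fun ⟨s, hs⟩ => ?_) (sub_nonneg.mpr hc)
  have hcompl := hdom sᶜ
  rw [probReal_compl_eq_one_sub hs, probReal_compl_eq_one_sub hs] at hcompl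
  have hP : 0 ≤ (1 - c) * P.real s := mul_nonneg (sub_nonneg.mpr hc) measureReal_nonneg
  have hP' : (1 - c) * P.real s ≤ 1 - c :=
    mul_le_of_le_one_right (sub_nonneg.mpr hc) measureReal_le_one
  rw [← measureReal_def, ← measureReal_def, abs_le]
  constructor <;> nlinarith [hdom s]

open Real in
theorem div_mul_gaussianPDFReal_le (m : ℝ) {σ₁ σ₂ : ℝ≥0} (h₁ : 0 < σ₁) (h₁₂ : σ₁ ≤ σ₂) (x : ℝ) :
    (σ₁ / σ₂ : ℝ) * gaussianPDFReal m (σ₁ ^ 2) x ≤ gaussianPDFReal m (σ₂ ^ 2) x := by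
  have h₂ : 0 < σ₂ := h₁.trans_le h₁₂
  have hpdf : ∀ σ : ℝ≥0, gaussianPDFReal m (σ ^ 2) x =
      (√(2 * π) * σ)⁻¹ * rexp (-(x - m) ^ 2 / (2 * σ ^ 2)) := fun σ => by
    rw [gaussianPDFReal, NNReal.coe_pow, sqrt_mul (by positivity), sqrt_sq σ.coe_nonneg]
  have hexp : rexp (-(x - m) ^ 2 / (2 * σ₁ ^ 2)) ≤ rexp (-(x - m) ^ 2 / (2 * σ₂ ^ 2)) := by
    rw [exp_le_exp, neg_div, neg_div, neg_le_neg_iff]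
    gcongr
  calc (σ₁ / σ₂ : ℝ) * gaussianPDFReal m (σ₁ ^ 2) x
      = (√(2 * π) * σ₂)⁻¹ * rexp (-(x - m) ^ 2 / (2 * σ₁ ^ 2)) := by
        rw [hpdf]; field_simp
    _ ≤ gaussianPDFReal m (σ₂ ^ 2) x := by
        rw [hpdf]; gcongr

theorem smul_gaussianReal_le (m : ℝ) {σ₁ σ₂ : ℝ≥0} (h₁₂ : σ₁ ≤ σ₂) :
    (σ₁ / σ₂) • gaussianReal m (σ₁ ^ 2) ≤ gaussianReal m (σ₂ ^ 2) := by
  rcases eq_zero_or_pos σ₁ with rfl | h₁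
  · simpa using Measure.zero_le _
  have h₂ : 0 < σ₂ := h₁.trans_le h₁₂
  rw [gaussianReal_of_var_ne_zero m (pow_pos h₁ 2).ne',
    gaussianReal_of_var_ne_zero m (pow_pos h₂ 2).ne', ENNReal.smul_def,
    ← withDensity_smul _ (measurable_gaussianPDF m _)]
  refine withDensity_mono (ae_of_all _ fun x => ?_)
  simp only [Pi.smul_apply, smul_eq_mul, gaussianPDF]
  rw [← ENNReal.ofReal_coe_nnreal, ← ENNReal.ofReal_mul (by positivity), NNReal.coe_div]
  exact ENNReal.ofReal_le_ofReal (div_mul_gaussianPDFReal_le m h₁ h₁₂ x)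

theorem stmt6_general (σ₁ σ₂ : ℝ≥0) (h12 : σ₁ ≤ σ₂) (n : ℕ) :
    tvDist (Measure.pi (fun _ : Fin n => gaussianReal 0 (σ₁ ^ 2)))
        (Measure.pi (fun _ : Fin n => gaussianReal 0 (σ₂ ^ 2)))
      ≤ 1 - ((σ₁ : ℝ) / (σ₂ : ℝ)) ^ n := by
  have hsmul : (σ₁ / σ₂) ^ n • Measure.pi (fun _ : Fin n => gaussianReal 0 (σ₁ ^ 2)) ≤
      Measure.pi (fun _ : Fin n => gaussianReal 0 (σ₂ ^ 2)) := by
    calc (σ₁ / σ₂) ^ n • Measure.pi (fun _ : Fin n => gaussianReal 0 (σ₁ ^ 2))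
        = Measure.pi (fun _ : Fin n => (σ₁ / σ₂) • gaussianReal 0 (σ₁ ^ 2)) := by
          rw [Measure.pi_smul, Finset.prod_const, Finset.card_univ, Fintype.card_fin]
      _ ≤ _ := Measure.pi_mono fun _ => smul_gaussianReal_le 0 h12
  simpa using tvDist_le_one_sub_of_smul_le hsmul

theorem stmt6 (σ₁ σ₂ : ℝ≥0) (h1 : 0 < σ₁) (h12 : σ₁ ≤ σ₂) (n : ℕ) (hn : 1 ≤ n) :
    tvDist (Measure.pi (fun _ : Fin n => gaussianReal 0 (σ₁ ^ 2)))
        (Measure.pi (fun _ : Fin n => gaussianReal 0 (σ₂ ^ 2)))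
      ≤ 1 - ((σ₁ : ℝ) / (σ₂ : ℝ)) ^ n :=
  stmt6_general σ₁ σ₂ h12 n
end
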